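/- Let (V₀, g) be a finite-dimensional positive definite real inner product space of dimension m and let A₁, A₂ be algebraic curvature tensors on V₀. Then on V := V₀ × V₀ the multilinear map A := Re((A₁ + i·A₂)^ℂ) is an algebraic curvature tensor, and the symmetric bilinear form ⟨(x⁺,x⁻),(y⁺,y⁻)⟩ := g(x⁺,y⁺) − g(x⁻,y⁻) is nondegenerate of signature (m, m); hence M(V₀,g,A₁,A₂) := (V, ⟨·,·⟩, A) is a model. -/

import Mathlib

open TensorProduct

/-- `f : W⁴ → ℝ` is multilinear over `ℝ` in each of its four slots. -/
def IsML {W : Type*} [AddCommGroup W] [Module ℝ W] (f : W → W → W → W → ℝ) : Prop :=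
  (∀ x x' y z w, f (x + x') y z w = f x y z w + f x' y z w) ∧
  (∀ (c : ℝ) x y z w, f (c • x) y z w = c * f x y z w) ∧
  (∀ x y y' z w, f x (y + y') z w = f x y z w + f x y' z w) ∧
  (∀ (c : ℝ) x y z w, f x (c • y) z w = c * f x y z w) ∧
  (∀ x y z z' w, f x y (z + z') w = f x y z w + f x y z' w) ∧
  (∀ (c : ℝ) x y z w, f x y (c • z) w = c * f x y z w) ∧
  (∀ x y z w w', f x y z (w + w') = f x y z w + f x y z w') ∧
  (∀ (c : ℝ) x y z w, f x y z (c • w) = c * f x y z w)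

/-- The symmetries of the Riemann curvature tensor. -/
def IsCurvSym {W : Type*} [AddCommGroup W] [Module ℝ W] (f : W → W → W → W → ℝ) : Prop :=
  (∀ x y z w, f x y z w = - f y x z w) ∧
  (∀ x y z w, f x y z w = f z w x y) ∧
  (∀ x y z w, f x y z w + f y z x w + f z x y w = 0)

/-- An algebraic curvature tensor: a multilinear map with the curvature symmetries. -/
def IsACT {W : Type*} [AddCommGroup W] [Module ℝ W] (f : W → W → W → W → ℝ) : Prop :=
  IsML f ∧ IsCurvSym f

/-- The defining value of `⟨ρ x, y⟩`: the trace of `z ↦ ½𝓡(z,x)y + ½𝓡(z,y)x`,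
where `R` is the (curried) curvature operator. -/
noncomputable def ricciForm {V : Type*} [AddCommGroup V] [Module ℝ V]
    (R : V →ₗ[ℝ] V →ₗ[ℝ] V →ₗ[ℝ] V) (x y : V) : ℝ :=
  LinearMap.trace ℝ V
    (((1 : ℝ) / 2) • ((R.flip x).flip y) + ((1 : ℝ) / 2) • ((R.flip y).flip x))

/-- The Jacobi--Ricci commuting identity of Lemma 1 (3). -/
def JRComm {V : Type*} [AddCommGroup V] [Module ℝ V]
    (A : V → V → V → V → ℝ) (ρ : V →ₗ[ℝ] V) : Prop :=
  ∀ v₁ v₂ v₃ v₄ : V,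
    A (ρ v₁) v₂ v₃ v₄ = A v₁ (ρ v₂) v₃ v₄ ∧
    A v₁ (ρ v₂) v₃ v₄ = A v₁ v₂ (ρ v₃) v₄ ∧
    A v₁ v₂ (ρ v₃) v₄ = A v₁ v₂ v₃ (ρ v₄)

/-- The ℂ-valued tensor `A₁ + i·A₂`. -/
noncomputable def acx {W : Type*} [AddCommGroup W] [Module ℝ W]
    (A₁ A₂ : W → W → W → W → ℝ) (x y z w : W) : ℂ :=
  (A₁ x y z w : ℂ) + Complex.I * (A₂ x y z w : ℂ)

/-- The complex multilinear extension `(A₁ + i·A₂)^ℂ` of `A₁ + i·A₂` to the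
complexification of `W`, where `W × W` is identified with `W ⊗ ℂ` via
`(x⁺, x⁻) ↔ x⁺ + i·x⁻`. -/
noncomputable def acExt {W : Type*} [AddCommGroup W] [Module ℝ W]
    (A₁ A₂ : W → W → W → W → ℝ) (p q r s : W × W) : ℂ :=
  acx A₁ A₂ p.1 q.1 r.1 s.1
  + Complex.I * (acx A₁ A₂ p.2 q.1 r.1 s.1 + acx A₁ A₂ p.1 q.2 r.1 s.1
      + acx A₁ A₂ p.1 q.1 r.2 s.1 + acx A₁ A₂ p.1 q.1 r.1 s.2)
  - (acx A₁ A₂ p.2 q.2 r.1 s.1 + acx A₁ A₂ p.2 q.1 r.2 s.1 + acx A₁ A₂ p.2 q.1 r.1 s.2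
      + acx A₁ A₂ p.1 q.2 r.2 s.1 + acx A₁ A₂ p.1 q.2 r.1 s.2 + acx A₁ A₂ p.1 q.1 r.2 s.2)
  - Complex.I * (acx A₁ A₂ p.2 q.2 r.2 s.1 + acx A₁ A₂ p.2 q.2 r.1 s.2
      + acx A₁ A₂ p.2 q.1 r.2 s.2 + acx A₁ A₂ p.1 q.2 r.2 s.2)
  + acx A₁ A₂ p.2 q.2 r.2 s.2

/-- The curvature tensor `A := Re((A₁ + i·A₂)^ℂ)` of the model `M(V₀,g,A₁,A₂)`. -/
noncomputable def modelA {W : Type*} [AddCommGroup W] [Module ℝ W]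
    (A₁ A₂ : W → W → W → W → ℝ) (p q r s : W × W) : ℝ :=
  (acExt A₁ A₂ p q r s).re

/-- The inner product `⟨(x⁺,x⁻),(y⁺,y⁻)⟩ = g(x⁺,y⁺) − g(x⁻,y⁻)` of the model
`M(V₀,g,A₁,A₂)`. -/
def modelB {W : Type*} [AddCommGroup W] [Module ℝ W]
    (g : LinearMap.BilinForm ℝ W) (p q : W × W) : ℝ :=
  g p.1 q.1 - g p.2 q.2

/-- `f` is Einstein with Einstein constant `a` on the positive definite inner product
space `(W, g)`: for every `g`-orthonormal basis `{e_k}` one has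
`Σ_k f(x, e_k, e_k, y) = a·g(x,y)`. -/
def IsEinsteinWith {W : Type*} [AddCommGroup W] [Module ℝ W]
    (g : LinearMap.BilinForm ℝ W) (f : W → W → W → W → ℝ) (a : ℝ) : Prop :=
  ∀ (n : ℕ) (b : Module.Basis (Fin n) ℝ W),
    (∀ i j, g (b i) (b j) = if i = j then 1 else 0) →
    ∀ x y, (∑ k, f x (b k) (b k) y) = a * g x y


/-! `W × W` is read as the complexification of `W`, `p ↔ p.1 + i • p.2`. A complex multilinear
form is then determined by its restriction `F` to `W`: expanding each slot into `p.1 + i • p.2`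
writes it as a sum of 16 terms `i^k F(…)`. Every identity that `F` satisfies termwise (additivity,
the curvature symmetries) is therefore inherited by the extension, and by its real part. On the
metric side, a `g`-orthonormal basis of `V₀` yields the basis of `V₀ × V₀` realising the signature
`(m, m)`. -/

namespace ComplexExt

def part {W : Type*} : Bool → W × W → W
  | false, p => p.1
  | true, p => p.2

/-- The factor (`1` or `i`) in front of `part a p` in `p = p.1 + i • p.2`. -/
def unit : Bool → ℂ
  | false => 1
  | true => Complex.I

@[simp] lemma part_add {W : Type*} [AddCommGroup W] (a : Bool) (p p' : W × W) :
    part a (p + p') = part a p + part a p' := by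
  cases a <;> rfl

@[simp] lemma part_smul {W : Type*} [AddCommGroup W] [Module ℝ W] (a : Bool) (c : ℝ)
    (p : W × W) : part a (c • p) = c • part a p := by
  cases a <;> rfl

end ComplexExt

open ComplexExt

noncomputable def complexExt {W : Type*} (F : W → W → W → W → ℂ) (p q r s : W × W) : ℂ :=
  ∑ a, ∑ b, ∑ c, ∑ d, unit a * unit b * unit c * unit d *
    F (part a p) (part b q) (part c r) (part d s)

section ComplexExtension

variable {W : Type*} {F : W → W → W → W → ℂ}

lemma complexExt_add_left [AddCommGroup W]
    (hF : ∀ x x' y z w, F (x + x') y z w = F x y z w + F x' y z w) (p p' q r s : W × W) :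
    complexExt F (p + p') q r s = complexExt F p q r s + complexExt F p' q r s := by
  simp only [complexExt, Fintype.sum_bool, part_add, hF]
  ring

lemma complexExt_smul_left [AddCommGroup W] [Module ℝ W]
    (hF : ∀ (c : ℝ) x y z w, F (c • x) y z w = c * F x y z w) (c : ℝ) (p q r s : W × W) :
    complexExt F (c • p) q r s = c * complexExt F p q r s := by
  simp only [complexExt, Fintype.sum_bool, part_smul, hF]
  ring

lemma complexExt_swap (hF : ∀ x y z w, F x y z w = -F y x z w) (p q r s : W × W) :
    complexExt F p q r s = -complexExt F q p r s := by
  have key : ∑ a, ∑ b, ∑ c, ∑ d, unit a * unit b * unit c * unit d *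
      (F (part a p) (part b q) (part c r) (part d s)
        + F (part b q) (part a p) (part c r) (part d s)) = 0 := by
    simp only [hF (part _ p), neg_add_cancel, mul_zero, Finset.sum_const_zero]
  simp only [complexExt, Fintype.sum_bool] at key ⊢
  linear_combination key

lemma complexExt_pair (hF : ∀ x y z w, F x y z w = F z w x y) (p q r s : W × W) :
    complexExt F p q r s = complexExt F r s p q := by
  have key : ∑ a, ∑ b, ∑ c, ∑ d, unit a * unit b * unit c * unit d *
      (F (part a p) (part b q) (part c r) (part d s)
        - F (part c r) (part d s) (part a p) (part b q)) = 0 := by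
    simp only [hF (part _ p), sub_self, mul_zero, Finset.sum_const_zero]
  simp only [complexExt, Fintype.sum_bool] at key ⊢
  linear_combination key

lemma complexExt_bianchi (hF : ∀ x y z w, F x y z w + F y z x w + F z x y w = 0)
    (p q r s : W × W) :
    complexExt F p q r s + complexExt F q r p s + complexExt F r p q s = 0 := by
  have key : ∑ a, ∑ b, ∑ c, ∑ d, unit a * unit b * unit c * unit d *
      (F (part a p) (part b q) (part c r) (part d s)
        + F (part b q) (part c r) (part a p) (part d s)
        + F (part c r) (part a p) (part b q) (part d s)) = 0 := by
    simp only [hF, mul_zero, Finset.sum_const_zero]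
  simp only [complexExt, Fintype.sum_bool] at key ⊢
  linear_combination key

end ComplexExtension

section CurvatureTensor

variable {W : Type*} [AddCommGroup W] [Module ℝ W]

lemma IsCurvSym.add_second {f : W → W → W → W → ℝ} (hf : IsCurvSym f)
    (hadd : ∀ x x' y z w, f (x + x') y z w = f x y z w + f x' y z w) (x y y' z w : W) :
    f x (y + y') z w = f x y z w + f x y' z w := by
  rw [hf.1, hadd, hf.1 y, hf.1 y']
  ring

lemma IsCurvSym.smul_second {f : W → W → W → W → ℝ} (hf : IsCurvSym f)
    (hsmul : ∀ (c : ℝ) x y z w, f (c • x) y z w = c * f x y z w) (c : ℝ) (x y z w : W) :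
    f x (c • y) z w = c * f x y z w := by
  rw [hf.1, hsmul, hf.1 y]
  ring

lemma IsCurvSym.isML {f : W → W → W → W → ℝ} (hf : IsCurvSym f)
    (hadd : ∀ x x' y z w, f (x + x') y z w = f x y z w + f x' y z w)
    (hsmul : ∀ (c : ℝ) x y z w, f (c • x) y z w = c * f x y z w) : IsML f := by
  refine ⟨hadd, hsmul, hf.add_second hadd, hf.smul_second hsmul, ?_, ?_, ?_, ?_⟩
  · intro x y z z' w
    rw [hf.2.1, hadd, hf.2.1 z, hf.2.1 z']
  · intro c x y z w
    rw [hf.2.1, hsmul, hf.2.1 z]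
  · intro x y z w w'
    rw [hf.2.1, hf.add_second hadd, hf.2.1 z, hf.2.1 z]
  · intro c x y z w
    rw [hf.2.1, hf.smul_second hsmul, hf.2.1 z]

variable {A₁ A₂ : W → W → W → W → ℝ}

lemma acExt_eq_complexExt (A₁ A₂ : W → W → W → W → ℝ) :
    acExt A₁ A₂ = complexExt (acx A₁ A₂) := by
  ext p q r s
  simp only [acExt, complexExt, Fintype.sum_bool, part, unit, one_mul, mul_one,
    Complex.I_mul_I, neg_mul, neg_neg]
  ring

lemma acx_add_left (h₁ : IsML A₁) (h₂ : IsML A₂) (x x' y z w : W) :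
    acx A₁ A₂ (x + x') y z w = acx A₁ A₂ x y z w + acx A₁ A₂ x' y z w := by
  simp only [acx, h₁.1, h₂.1]
  push_cast
  ring

lemma acx_smul_left (h₁ : IsML A₁) (h₂ : IsML A₂) (c : ℝ) (x y z w : W) :
    acx A₁ A₂ (c • x) y z w = c * acx A₁ A₂ x y z w := by
  simp only [acx, h₁.2.1, h₂.2.1]
  push_cast
  ring

lemma acx_swap (h₁ : IsCurvSym A₁) (h₂ : IsCurvSym A₂) (x y z w : W) :
    acx A₁ A₂ x y z w = -acx A₁ A₂ y x z w := by
  simp only [acx, h₁.1 x, h₂.1 x]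
  push_cast
  ring

lemma acx_pair (h₁ : IsCurvSym A₁) (h₂ : IsCurvSym A₂) (x y z w : W) :
    acx A₁ A₂ x y z w = acx A₁ A₂ z w x y := by
  simp only [acx, h₁.2.1 x, h₂.2.1 x]

lemma acx_bianchi (h₁ : IsCurvSym A₁) (h₂ : IsCurvSym A₂) (x y z w : W) :
    acx A₁ A₂ x y z w + acx A₁ A₂ y z x w + acx A₁ A₂ z x y w = 0 := by
  have bianchi₁ : (A₁ x y z w : ℂ) + A₁ y z x w + A₁ z x y w = 0 := by
    exact_mod_cast h₁.2.2 x y z w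
  have bianchi₂ : (A₂ x y z w : ℂ) + A₂ y z x w + A₂ z x y w = 0 := by
    exact_mod_cast h₂.2.2 x y z w
  simp only [acx]
  linear_combination bianchi₁ + Complex.I * bianchi₂

lemma modelA_eq_re_complexExt (p q r s : W × W) :
    modelA A₁ A₂ p q r s = (complexExt (acx A₁ A₂) p q r s).re := by
  rw [modelA, acExt_eq_complexExt]

lemma isCurvSym_modelA (h₁ : IsCurvSym A₁) (h₂ : IsCurvSym A₂) :
    IsCurvSym (modelA A₁ A₂) := by
  refine ⟨fun p q r s => ?_, fun p q r s => ?_, fun p q r s => ?_⟩ <;>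
    simp only [modelA_eq_re_complexExt]
  · rw [complexExt_swap (acx_swap h₁ h₂), Complex.neg_re]
  · rw [complexExt_pair (acx_pair h₁ h₂)]
  · rw [← Complex.add_re, ← Complex.add_re, complexExt_bianchi (acx_bianchi h₁ h₂),
      Complex.zero_re]

lemma isACT_modelA (h₁ : IsACT A₁) (h₂ : IsACT A₂) : IsACT (modelA A₁ A₂) := by
  have hsym := isCurvSym_modelA h₁.2 h₂.2
  refine ⟨hsym.isML (fun p p' q r s => ?_) (fun c p q r s => ?_), hsym⟩ <;>
    simp only [modelA_eq_re_complexExt]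
  · rw [complexExt_add_left (acx_add_left h₁.1 h₂.1), Complex.add_re]
  · rw [complexExt_smul_left (acx_smul_left h₁.1 h₂.1), Complex.re_ofReal_mul]

end CurvatureTensor

section Metric

variable {V : Type*} [AddCommGroup V] [Module ℝ V] {g : LinearMap.BilinForm ℝ V}

lemma modelB_comm (hg : ∀ x y, g x y = g y x) (p q : V × V) :
    modelB g p q = modelB g q p := by
  rw [modelB, modelB, hg p.1, hg p.2]

lemma eq_zero_of_forall_modelB_eq_zero (hg : ∀ x : V, x ≠ 0 → 0 < g x x) {p : V × V}
    (hp : ∀ q, modelB g p q = 0) : p = 0 := by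
  have h₁ := hp (p.1, 0)
  have h₂ := hp (0, p.2)
  simp only [modelB, map_zero, sub_zero, zero_sub, neg_eq_zero] at h₁ h₂
  have hp₁ : p.1 = 0 := by_contra fun h => (hg _ h).ne' h₁
  have hp₂ : p.2 = 0 := by_contra fun h => (hg _ h).ne' h₂
  exact Prod.ext hp₁ hp₂

/-- Gram–Schmidt, via the inner product space structure that `g` puts on `V`. -/
lemma exists_basis_orthonormal [FiniteDimensional ℝ V] {n : ℕ} (hn : Module.finrank ℝ V = n)
    (hsymm : ∀ x y, g x y = g y x) (hpos : ∀ x : V, x ≠ 0 → 0 < g x x) :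
    ∃ b : Module.Basis (Fin n) ℝ V, ∀ i j, g (b i) (b j) = if i = j then 1 else 0 := by
  subst hn
  let core : InnerProductSpace.Core ℝ V :=
    { inner := fun x y => g x y
      conj_inner_symm := fun x y => hsymm y x
      re_inner_nonneg := fun x => by
        by_cases hx : x = 0
        · simp [hx]
        · exact (hpos x hx).le
      add_left := fun x y z => by simp
      smul_left := fun x y r => by simp
      definite := fun x hx => by_contra fun h => (hpos x h).ne' hx }
  let _ := InnerProductSpace.Core.toNormedAddCommGroup (cd := core)
  let _ := InnerProductSpace.ofCore core.toCore
  refine ⟨(stdOrthonormalBasis ℝ V).toBasis, fun i j => ?_⟩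
  rw [OrthonormalBasis.coe_toBasis]
  exact orthonormal_iff_ite.1 (stdOrthonormalBasis ℝ V).orthonormal i j

end Metric

theorem statement5
    {V₀ : Type*} [AddCommGroup V₀] [Module ℝ V₀] [FiniteDimensional ℝ V₀]
    (m : ℕ) (hm : Module.finrank ℝ V₀ = m)
    (g : LinearMap.BilinForm ℝ V₀)
    (hgsymm : ∀ x y, g x y = g y x)
    (hgpos : ∀ x : V₀, x ≠ 0 → 0 < g x x)
    (A₁ A₂ : V₀ → V₀ → V₀ → V₀ → ℝ) (hA₁ : IsACT A₁) (hA₂ : IsACT A₂) :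
    IsACT (modelA A₁ A₂) ∧
    (∀ p q : V₀ × V₀, modelB g p q = modelB g q p) ∧
    (∀ p : V₀ × V₀, (∀ q, modelB g p q = 0) → p = 0) ∧
    (∃ b : Module.Basis (Fin m ⊕ Fin m) ℝ (V₀ × V₀),
      (∀ i j, modelB g (b (Sum.inl i)) (b (Sum.inl j)) = if i = j then 1 else 0) ∧
      (∀ i j, modelB g (b (Sum.inr i)) (b (Sum.inr j)) = if i = j then -1 else 0) ∧
      (∀ i j, modelB g (b (Sum.inl i)) (b (Sum.inr j)) = 0)) := by
  obtain ⟨b, hb⟩ := exists_basis_orthonormal hm hgsymm hgpos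
  refine ⟨isACT_modelA hA₁ hA₂, modelB_comm hgsymm, fun p => eq_zero_of_forall_modelB_eq_zero hgpos,
    b.prod b, fun i j => ?_, fun i j => ?_, fun i j => ?_⟩ <;>
    simp [modelB, hb, neg_ite]
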